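/- As formal power series in ℤ[[q]], ∑_{n≥0} q^{n(n+1)/2} = (q^2;q^2)_∞^2 / (q;q)_∞ (Gauss's identity). -/

import Mathlib

open PowerSeries Finset

namespace GaussAux

abbrev R := PowerSeries ℤ
noncomputable abbrev XX : R := PowerSeries.X

/-- triangular numbers -/
def tri : ℕ → ℕ
  | 0 => 0
  | n + 1 => tri n + (n + 1)

lemma two_tri (n : ℕ) : 2 * tri n = n * (n + 1) := by
  induction n with
  | zero => rfl
  | succ n ih => simp [tri, Nat.mul_add, ih]; ring

lemma tri_add (a b : ℕ) : tri (a + b) = tri a + a * b + tri b := by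
  induction b with
  | zero => simp [tri]
  | succ b ih => simp [tri, ← Nat.add_assoc, ih]; ring

lemma le_tri (n : ℕ) : n ≤ tri n := by
  induction n with
  | zero => simp
  | succ n ih => simp only [tri]; omega

lemma tri_mono : Monotone tri := by
  apply monotone_nat_of_le_succ
  intro n; simp [tri]

/-- Gaussian binomial coefficients as power series -/
noncomputable def gb : ℕ → ℕ → R
  | 0, j => if j = 0 then 1 else 0
  | n + 1, j => gb n j + (if j = 0 then 0 else XX ^ (n + 1 - j) * gb n (j - 1))

lemma gb_zero (n : ℕ) : gb n 0 = 1 := by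
  induction n with
  | zero => simp [gb]
  | succ n ih => simp [gb, ih]

lemma gb_of_gt {n j : ℕ} (h : n < j) : gb n j = 0 := by
  induction n generalizing j with
  | zero => simp [gb]; omega
  | succ n ih =>
    have hj : j ≠ 0 := by omega
    simp [gb, hj, ih (by omega : n < j), ih (by omega : n < j - 1)]

lemma gb_pascal (n j : ℕ) (hj : 1 ≤ j) :
    gb (n + 1) j = gb n j + XX ^ (n + 1 - j) * gb n (j - 1) := by
  have : j ≠ 0 := by omega
  simp [gb, this]

lemma gb_diag (n : ℕ) : gb n n = 1 := by
  induction n with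
  | zero => simp [gb]
  | succ n ih =>
    rw [gb_pascal n (n+1) (by omega), gb_of_gt (by omega)]
    simp [show n + 1 - 1 = n by omega, ih]

/-- dual Pascal rule -/
lemma gb_pascal' (n j : ℕ) (hj : 1 ≤ j) :
    gb (n + 1) j = XX ^ j * gb n j + gb n (j - 1) := by
  induction n generalizing j with
  | zero =>
    rcases Nat.eq_or_lt_of_le hj with h | h
    · rw [← h]
      rw [gb_pascal 0 1 le_rfl]
      simp [gb_zero, gb_of_gt]
    · rw [gb_of_gt (by omega : 0 + 1 < j), gb_of_gt (by omega : 0 < j),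
        gb_of_gt (by omega : 0 < j - 1)]
      simp
  | succ n ih =>
    rcases Nat.lt_or_ge (n + 1 + 1) j with h | h
    · -- j > n + 2 : everything vanishes
      rw [gb_of_gt (by omega : n + 1 + 1 < j), gb_of_gt (by omega : n + 1 < j),
        gb_of_gt (by omega : n + 1 < j - 1)]
      simp
    rcases Nat.eq_or_lt_of_le h with h2 | h2
    · -- j = n + 2
      rw [h2, gb_diag, gb_of_gt (by omega : n + 1 < n + 1 + 1),
        show n + 1 + 1 - 1 = n + 1 by omega, gb_diag]
      simp
    rcases Nat.eq_or_lt_of_le hj with h1 | h1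
    · -- j = 1
      rw [← h1]
      have e1 := ih 1 le_rfl
      have e2 := gb_pascal n 1 le_rfl
      rw [gb_pascal (n+1) 1 le_rfl]
      simp only [show n + 1 + 1 - 1 = n + 1 by omega, show n + 1 - 1 = n by omega,
        show (1:ℕ) - 1 = 0 by omega, gb_zero, pow_one] at *
      linear_combination e1 - XX * e2
    · -- 2 ≤ j ≤ n + 1
      obtain ⟨r, rfl⟩ : ∃ r, j = r + 2 := ⟨j - 2, by omega⟩
      obtain ⟨l, rfl⟩ : ∃ l, n = r + l + 1 := ⟨n - r - 1, by omega⟩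
      have p1 := gb_pascal (r + l + 2) (r + 2) (by omega)
      have p2 := gb_pascal (r + l + 1) (r + 2) (by omega)
      have p3 := gb_pascal (r + l + 1) (r + 1) (by omega)
      have i1 := ih (r + 2) (by omega)
      have i2 := ih (r + 1) (by omega)
      simp only [show r + l + 2 + 1 - (r + 2) = l + 1 by omega,
        show r + 2 - 1 = r + 1 by omega, show r + 1 - 1 = r by omega,
        show r + l + 1 + 1 - (r + 2) = l by omega,
        show r + l + 1 + 1 - (r + 1) = l + 1 by omega,
        show r + l + 1 + 1 = r + l + 2 by omega,
        show r + l + 2 + 1 = r + l + 3 by omega] at *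
      linear_combination p1 + i1 + XX ^ (l + 1) * i2 - XX ^ (r + 2) * p2 - p3

/-- partial products -/
noncomputable def Pa (n : ℕ) : R := ∏ k ∈ Finset.range n, (1 - XX ^ (k + 1))
noncomputable def Da (n : ℕ) : R := ∏ k ∈ Finset.range n, (1 + XX ^ (k + 1))
noncomputable def P2 (n : ℕ) : R := ∏ k ∈ Finset.range n, (1 - XX ^ (2 * (k + 1)))

lemma P2_eq (n : ℕ) : P2 n = Pa n * Da n := by
  rw [Pa, Da, P2, ← Finset.prod_mul_distrib]
  refine Finset.prod_congr rfl fun k _ => ?_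
  have : (2 : ℕ) * (k + 1) = (k + 1) + (k + 1) := by omega
  rw [this, pow_add]; ring

/-- the Cauchy identity evaluated at z = X^m -/
lemma cauchy (m n : ℕ) :
    ∏ k ∈ Finset.range n, (XX ^ m + XX ^ (k + 1)) =
      ∑ j ∈ Finset.range (n + 1), gb n j * XX ^ (tri j + m * (n - j)) := by
  induction n with
  | zero => simp [gb, tri]
  | succ n ih =>
    rw [Finset.prod_range_succ, ih, Finset.sum_mul]
    have lhs_eq : ∑ j ∈ Finset.range (n + 1),
        gb n j * XX ^ (tri j + m * (n - j)) * (XX ^ m + XX ^ (n + 1)) =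
        (∑ j ∈ Finset.range (n + 1), gb n j * XX ^ (tri j + m * (n + 1 - j))) +
          ∑ j ∈ Finset.range (n + 1), gb n j * XX ^ (tri (j + 1) + (m + 1) * (n - j)) := by
      rw [← Finset.sum_add_distrib]
      refine Finset.sum_congr rfl fun j hj => ?_
      have hjn : j ≤ n := by simpa [Nat.lt_succ_iff] using hj
      have e1 : tri j + m * (n + 1 - j) = tri j + m * (n - j) + m := by
        rw [show n + 1 - j = (n - j) + 1 by omega, Nat.mul_succ]; omega
      have e2 : tri (j + 1) + (m + 1) * (n - j) = tri j + m * (n - j) + (n + 1) := by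
        have h1 : (m + 1) * (n - j) = m * (n - j) + (n - j) := by ring
        have h2 : tri (j + 1) = tri j + (j + 1) := rfl
        omega
      rw [e1, e2, pow_add, pow_add]
      ring
    rw [lhs_eq]
    have expand : ∀ j : ℕ, gb (n + 1) j =
        gb n j + (if j = 0 then 0 else XX ^ (n + 1 - j) * gb n (j - 1)) := fun j => rfl
    have rhs_eq : ∑ j ∈ Finset.range (n + 1 + 1), gb (n + 1) j * XX ^ (tri j + m * (n + 1 - j)) =
        (∑ j ∈ Finset.range (n + 1 + 1), gb n j * XX ^ (tri j + m * (n + 1 - j))) +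
          ∑ j ∈ Finset.range (n + 1 + 1),
            (if j = 0 then 0 else XX ^ (n + 1 - j) * gb n (j - 1)) * XX ^ (tri j + m * (n + 1 - j)) := by
      rw [← Finset.sum_add_distrib]
      refine Finset.sum_congr rfl fun j _ => ?_
      rw [expand j, add_mul]
    rw [rhs_eq]
    congr 1
    · symm
      rw [Finset.sum_range_succ, gb_of_gt (by omega : n < n + 1)]
      simp
    · symm
      rw [Finset.sum_range_succ']
      have h0 : (if (0:ℕ) = 0 then (0:R) else XX ^ (n + 1 - 0) * gb n (0 - 1)) = 0 := by simp
      rw [h0, zero_mul, add_zero]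
      refine Finset.sum_congr rfl fun j hj => ?_
      have hjn : j ≤ n := by simpa [Nat.lt_succ_iff] using hj
      rw [if_neg (Nat.succ_ne_zero j)]
      symm
      have e3 : tri (j + 1) + (m + 1) * (n - j) = (n + 1 - (j + 1)) + (tri (j + 1) + m * (n + 1 - (j + 1))) := by
        have h1 : (m + 1) * (n - j) = m * (n - j) + (n - j) := by ring
        have h2 : n + 1 - (j + 1) = n - j := by omega
        rw [h2]; omega
      rw [e3, pow_add, Nat.add_sub_cancel]
      ring

lemma tri_eq_sum (n : ℕ) : tri n = ∑ k ∈ Finset.range n, (k + 1) := by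
  induction n with
  | zero => rfl
  | succ n ih => rw [Finset.sum_range_succ, ← ih]; rfl

lemma Da_succ' (p : ℕ) : ∏ i ∈ Finset.range (p + 1), (1 + XX ^ i) = 2 * Da p := by
  rw [Finset.prod_range_succ']
  simp [Da, two_mul]
  ring

lemma prod_split (p : ℕ) :
    ∏ k ∈ Finset.range (2 * (p + 1)), (XX ^ (p + 1) + XX ^ (k + 1)) =
      XX ^ (tri (p + 1) + (p + 1) * (p + 1)) * (2 * Da p * Da (p + 1)) := by
  set m := p + 1 with hm
  rw [two_mul, Finset.prod_range_add]
  have h1 : ∏ k ∈ Finset.range m, (XX ^ m + XX ^ (k + 1)) = XX ^ tri m * (2 * Da p) := by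
    have : ∀ k ∈ Finset.range m, XX ^ m + XX ^ (k + 1) = XX ^ (k + 1) * (1 + XX ^ (m - 1 - k)) := by
      intro k hk
      have hk' : k < m := Finset.mem_range.mp hk
      rw [mul_add, mul_one, ← pow_add, show k + 1 + (m - 1 - k) = m by omega]
      ring
    rw [Finset.prod_congr rfl this, Finset.prod_mul_distrib,
      Finset.prod_pow_eq_pow_sum, ← tri_eq_sum,
      Finset.prod_range_reflect (fun i => 1 + XX ^ i) m, hm, Da_succ' p]
  have h2 : ∏ k ∈ Finset.range m, (XX ^ m + XX ^ (m + k + 1)) = XX ^ (m * m) * Da m := by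
    have : ∀ k ∈ Finset.range m, XX ^ m + XX ^ (m + k + 1) = XX ^ m * (1 + XX ^ (k + 1)) := by
      intro k _
      rw [mul_add, mul_one, ← pow_add, show m + (k + 1) = m + k + 1 by omega]
    rw [Finset.prod_congr rfl this, Finset.prod_mul_distrib, Finset.prod_const, ← pow_mul, ← Da,
      Finset.card_range]
  rw [h1, h2, pow_add]
  ring
/-- symmetric triangular exponent -/
def t2 (m j : ℕ) : ℕ := if m ≤ j then tri (j - m) else tri (m - j - 1)

lemma tri_sq (i : ℕ) : tri (i + 1) + tri i = (i + 1) * (i + 1) := by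
  have h1 := two_tri (i + 1)
  have h2 := two_tri i
  nlinarith [h1, h2]

lemma exponent_eq (m j : ℕ) (hj : j ≤ 2 * m) :
    tri j + m * (2 * m - j) = (tri m + m * m) + t2 m j := by
  rcases le_or_gt m j with h | h
  · obtain ⟨i, rfl⟩ : ∃ i, j = m + i := ⟨j - m, by omega⟩
    have hi : i ≤ m := by omega
    rw [t2, if_pos h, tri_add, show m + i - m = i by omega, show 2 * m - (m + i) = m - i by omega]
    have h2 : m * (m - i) + m * i = m * m := by rw [← Nat.mul_add]; congr 1; omega
    omega
  · obtain ⟨i, rfl⟩ : ∃ i, m = j + (i + 1) := ⟨m - j - 1, by omega⟩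
    rw [t2, if_neg (by omega), show j + (i + 1) - j - 1 = i by omega,
      show 2 * (j + (i + 1)) - j = (j + (i + 1)) + (i + 1) by omega]
    have h1 : (j + (i + 1)) * (j + (i + 1) + (i + 1)) =
        (j + (i + 1)) * (j + (i + 1)) + (j + (i + 1)) * (i + 1) := by ring
    have h2 : tri (j + (i + 1)) = tri j + j * (i + 1) + tri (i + 1) := tri_add j (i + 1)
    have h3 : tri (i + 1) + tri i = (i + 1) * (i + 1) := tri_sq i
    have h4 : (j + (i + 1)) * (i + 1) = j * (i + 1) + (i + 1) * (i + 1) := by ring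
    omega

/-- the finite Gauss identity -/
lemma star (p : ℕ) :
    ∑ j ∈ Finset.range (2 * (p + 1) + 1), gb (2 * (p + 1)) j * XX ^ t2 (p + 1) j =
      2 * Da p * Da (p + 1) := by
  set m := p + 1 with hm
  have hc := cauchy m (2 * m)
  rw [prod_split p] at hc
  have hr : ∑ j ∈ Finset.range (2 * m + 1), gb (2 * m) j * XX ^ (tri j + m * (2 * m - j)) =
      XX ^ (tri m + m * m) * ∑ j ∈ Finset.range (2 * m + 1), gb (2 * m) j * XX ^ t2 m j := by
    rw [Finset.mul_sum]
    refine Finset.sum_congr rfl fun j hj => ?_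
    have hj' : j ≤ 2 * m := by
      have := Finset.mem_range.mp hj; omega
    rw [exponent_eq m j hj', pow_add]
    ring
  rw [hr] at hc
  have hx : (XX : R) ^ (tri m + m * m) ≠ 0 := pow_ne_zero _ PowerSeries.X_ne_zero
  exact mul_left_cancel₀ hx hc.symm

/-- congruence mod X^c -/
def MOD (c : ℕ) (a b : R) : Prop := XX ^ c ∣ (a - b)

lemma MOD.refl (c : ℕ) (a : R) : MOD c a a := by
  show XX ^ c ∣ a - a
  simp

lemma MOD.symm {c : ℕ} {a b : R} (h : MOD c a b) : MOD c b a := by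
  show XX ^ c ∣ b - a
  rw [show b - a = -(a - b) by ring]
  exact dvd_neg.mpr h

lemma MOD.trans {c : ℕ} {a b d : R} (h1 : MOD c a b) (h2 : MOD c b d) : MOD c a d := by
  show XX ^ c ∣ a - d
  rw [show a - d = (a - b) + (b - d) by ring]
  exact dvd_add h1 h2

lemma MOD.add {c : ℕ} {a b d e : R} (h1 : MOD c a b) (h2 : MOD c d e) :
    MOD c (a + d) (b + e) := by
  show XX ^ c ∣ a + d - (b + e)
  rw [show a + d - (b + e) = (a - b) + (d - e) by ring]
  exact dvd_add h1 h2

lemma MOD.mul {c : ℕ} {a b d e : R} (h1 : MOD c a b) (h2 : MOD c d e) :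
    MOD c (a * d) (b * e) := by
  show XX ^ c ∣ a * d - b * e
  rw [show a * d - b * e = a * (d - e) + e * (a - b) by ring]
  exact dvd_add (Dvd.dvd.mul_left h2 a) (Dvd.dvd.mul_left h1 e)

lemma MOD.mul_left {c : ℕ} (a : R) {d e : R} (h2 : MOD c d e) : MOD c (a * d) (a * e) :=
  (MOD.refl c a).mul h2

lemma MOD.sum {c : ℕ} {s : Finset ℕ} {f g : ℕ → R} (h : ∀ k ∈ s, MOD c (f k) (g k)) :
    MOD c (∑ k ∈ s, f k) (∑ k ∈ s, g k) := by
  classical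
  induction s using Finset.induction with
  | empty => exact MOD.refl c 0
  | insert x t hx ih =>
    rw [Finset.sum_insert hx, Finset.sum_insert hx]
    exact (h x (Finset.mem_insert_self x t)).add (ih fun k hk => h k (Finset.mem_insert_of_mem hk))

lemma MOD.prod_one {c : ℕ} {s : Finset ℕ} {f : ℕ → R} (h : ∀ k ∈ s, MOD c (f k) 1) :
    MOD c (∏ k ∈ s, f k) 1 := by
  classical
  induction s using Finset.induction with
  | empty => exact MOD.refl c 1
  | insert x t hx ih =>
    rw [Finset.prod_insert hx]
    have := (h x (Finset.mem_insert_self x t)).mul (ih fun k hk => h k (Finset.mem_insert_of_mem hk))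
    rwa [one_mul] at this

lemma MOD.X_pow_zero {c t : ℕ} (h : c ≤ t) : MOD c (XX ^ t) 0 := by
  show XX ^ c ∣ XX ^ t - 0
  rw [sub_zero]
  exact pow_dvd_pow _ h

lemma MOD.coeff_eq {c : ℕ} {a b : R} (h : MOD c a b) {j : ℕ} (hj : j < c) :
    PowerSeries.coeff j a = PowerSeries.coeff j b := by
  have := (PowerSeries.X_pow_dvd_iff.mp h) j hj
  rw [map_sub] at this
  linarith

lemma MOD.of_coeff {c : ℕ} {a b : R} (h : ∀ j, j < c → PowerSeries.coeff j a = PowerSeries.coeff j b) :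
    MOD c a b := by
  show XX ^ c ∣ a - b
  rw [PowerSeries.X_pow_dvd_iff]
  intro j hj
  rw [map_sub, h j hj, sub_self]

lemma MOD.cancel_two {c : ℕ} {a b : R} (h : MOD c (2 * a) (2 * b)) : MOD c a b := by
  refine MOD.of_coeff fun j hj => ?_
  have h1 := h.coeff_eq hj
  have h2 : (PowerSeries.coeff j) (2 * a) = 2 * PowerSeries.coeff j a := by
    rw [show (2 : R) = PowerSeries.C 2 by simp [map_ofNat], PowerSeries.coeff_C_mul]
  have h3 : (PowerSeries.coeff j) (2 * b) = 2 * PowerSeries.coeff j b := by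
    rw [show (2 : R) = PowerSeries.C 2 by simp [map_ofNat], PowerSeries.coeff_C_mul]
  rw [h2, h3] at h1
  omega

/-- stabilization in n -/
lemma gb_stab1 (N j : ℕ) (hj : N + 1 ≤ j) :
    ∀ n, j + N + 1 ≤ n → MOD (N + 1) (gb n j) (gb (j + N + 1) j) := by
  intro n
  induction n with
  | zero => intro h; omega
  | succ n ih =>
    intro h
    rcases Nat.eq_or_lt_of_le h with h1 | h1
    · rw [← h1]; exact MOD.refl _ _
    · have hn : j + N + 1 ≤ n := by omega
      refine MOD.trans ?_ (ih hn)
      rw [gb_pascal n j (by omega)]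
      have : MOD (N + 1) (XX ^ (n + 1 - j) * gb n (j - 1)) 0 := by
        have h0 := MOD.X_pow_zero (show N + 1 ≤ n + 1 - j by omega)
        have := h0.mul (MOD.refl (N + 1) (gb n (j - 1)))
        rwa [zero_mul] at this
      have h2 := (MOD.refl (N + 1) (gb n j)).add this
      rwa [add_zero] at h2

/-- stabilization along the diagonal -/
lemma gb_stab2 (N : ℕ) : ∀ j, N + 1 ≤ j →
    MOD (N + 1) (gb (j + N + 1) j) (gb (2 * N + 2) (N + 1)) := by
  intro j
  induction j with
  | zero => intro h; omega
  | succ j ih =>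
    intro h
    rcases Nat.eq_or_lt_of_le h with h1 | h1
    · rw [← h1]
      rw [show N + 1 + N + 1 = 2 * N + 2 by omega]
      exact MOD.refl _ _
    · have hj : N + 1 ≤ j := by omega
      rw [show j + 1 + N + 1 = (j + N + 1) + 1 by omega,
        gb_pascal' (j + N + 1) (j + 1) (by omega), Nat.add_sub_cancel]
      refine MOD.trans ?_ (MOD.trans (gb_stab1 N j hj (j + N + 1) (by omega)) (ih hj))
      have : MOD (N + 1) (XX ^ (j + 1) * gb (j + N + 1) (j + 1)) 0 := by
        have h0 := MOD.X_pow_zero (show N + 1 ≤ j + 1 by omega)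
        have := h0.mul (MOD.refl (N + 1) (gb (j + N + 1) (j + 1)))
        rwa [zero_mul] at this
      have h2 := this.add (MOD.refl (N + 1) (gb (j + N + 1) j))
      rwa [zero_add] at h2

lemma gb_stab (N n j : ℕ) (hj : N + 1 ≤ j) (hn : j + N + 1 ≤ n) :
    MOD (N + 1) (gb n j) (gb (2 * N + 2) (N + 1)) :=
  (gb_stab1 N j hj n hn).trans (gb_stab2 N j hj)

/-- the product formula for Gaussian binomials -/
lemma gb_mul_Pa : ∀ n j, j ≤ n → gb n j * (Pa j * Pa (n - j)) = Pa n := by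
  intro n
  induction n with
  | zero =>
    intro j hj
    interval_cases j
    simp [gb, Pa]
  | succ n ih =>
    intro j hj
    rcases Nat.eq_zero_or_pos j with h0 | h0
    · subst h0
      simp [gb_zero, Pa]
    rcases Nat.eq_or_lt_of_le hj with h1 | h1
    · subst h1
      rw [gb_diag, Nat.sub_self, one_mul]
      simp [Pa]
    -- 1 ≤ j ≤ n
    obtain ⟨r, rfl⟩ : ∃ r, j = r + 1 := ⟨j - 1, by omega⟩
    obtain ⟨l, rfl⟩ : ∃ l, n = r + l + 1 := ⟨n - r - 1, by omega⟩
    have i1 := ih (r + 1) (by omega)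
    have i2 := ih r (by omega)
    simp only [show r + l + 1 - (r + 1) = l by omega, show r + l + 1 - r = l + 1 by omega] at i1 i2
    rw [gb_pascal (r + l + 1) (r + 1) (by omega), Nat.add_sub_cancel,
      show r + l + 1 + 1 - (r + 1) = l + 1 by omega,
      show r + l + 1 + 1 = r + l + 2 by omega]
    have pa1 : Pa (l + 1) = Pa l * (1 - XX ^ (l + 1)) := Finset.prod_range_succ _ _
    have pa2 : Pa (r + 1) = Pa r * (1 - XX ^ (r + 1)) := Finset.prod_range_succ _ _
    have pa3 : Pa (r + l + 2) = Pa (r + l + 1) * (1 - XX ^ (r + l + 2)) := by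
      rw [show r + l + 2 = (r + l + 1) + 1 by omega]
      exact Finset.prod_range_succ _ _
    rw [pa3]
    linear_combination (1 - XX ^ (l + 1)) * i1 + XX ^ (l + 1) * (1 - XX ^ (r + 1)) * i2 +
      gb (r + l + 1) (r + 1) * Pa (r + 1) * pa1 +
      XX ^ (l + 1) * gb (r + l + 1) r * Pa (l + 1) * pa2

noncomputable def Sfin (m : ℕ) : R := ∑ i ∈ Finset.range m, XX ^ tri i

/-- the triangular number generating series -/
noncomputable def Sgen : R :=
  PowerSeries.mk fun N : ℕ =>
    ∑ n ∈ Finset.range (N + 1), if 2 * N = n * (n + 1) then (1 : ℤ) else 0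

lemma Sgen_mod (N m : ℕ) (hm : N + 1 ≤ m) : MOD (N + 1) Sgen (Sfin m) := by
  refine MOD.of_coeff fun j hj => ?_
  rw [Sgen, PowerSeries.coeff_mk, Sfin, map_sum]
  have step1 : ∀ i ∈ Finset.range m, (PowerSeries.coeff j) (XX ^ tri i) =
      if 2 * j = i * (i + 1) then (1 : ℤ) else 0 := by
    intro i _
    rw [PowerSeries.coeff_X_pow]
    have := two_tri i
    by_cases h : j = tri i
    · rw [if_pos h, if_pos (by omega)]
    · rw [if_neg h, if_neg (by omega)]
  rw [Finset.sum_congr rfl step1]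
  refine Finset.sum_subset (Finset.range_subset_range.mpr (by omega)) ?_
  intro n hn hn'
  have h1 : j < n := by
    simp only [Finset.mem_range, not_lt] at hn'
    omega
  rw [if_neg (by nlinarith)]

lemma t2_sum (m : ℕ) :
    ∑ j ∈ Finset.range (2 * m + 1), XX ^ t2 m j = 2 * Sfin m + XX ^ tri m := by
  rw [show 2 * m + 1 = m + (m + 1) by omega, Finset.sum_range_add]
  have A : ∑ j ∈ Finset.range m, XX ^ t2 m j = Sfin m := by
    have h : ∀ j ∈ Finset.range m, XX ^ t2 m j = XX ^ tri (m - 1 - j) := by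
      intro j hj
      have hj' : j < m := Finset.mem_range.mp hj
      rw [t2, if_neg (by omega), show m - j - 1 = m - 1 - j by omega]
    rw [Finset.sum_congr rfl h, Finset.sum_range_reflect (fun i => XX ^ tri i) m]
    rfl
  have B : ∑ i ∈ Finset.range (m + 1), XX ^ t2 m (m + i) = Sfin m + XX ^ tri m := by
    have h : ∀ i ∈ Finset.range (m + 1), XX ^ t2 m (m + i) = XX ^ tri i := by
      intro i _
      rw [t2, if_pos (by omega), Nat.add_sub_cancel_left]
    rw [Finset.sum_congr rfl h, Finset.sum_range_succ, Sfin]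
  rw [A, B]
  ring

/-- dropping high-index factors of a product, mod X^c -/
lemma prod_stab (c : ℕ) (f : ℕ → R) {a b : ℕ} (hab : a ≤ b)
    (h : ∀ k, a ≤ k → MOD c (f k) 1) :
    MOD c (∏ k ∈ Finset.range b, f k) (∏ k ∈ Finset.range a, f k) := by
  have split : (∏ k ∈ Finset.range a, f k) * (∏ k ∈ Finset.Ico a b, f k) =
      ∏ k ∈ Finset.range b, f k := by
    rw [Finset.range_eq_Ico, Finset.range_eq_Ico]
    exact Finset.prod_Ico_consecutive f (Nat.zero_le a) hab
  rw [← split]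
  have h1 : MOD c (∏ k ∈ Finset.Ico a b, f k) 1 :=
    MOD.prod_one fun k hk => h k (Finset.mem_Ico.mp hk).1
  have := (MOD.refl c (∏ k ∈ Finset.range a, f k)).mul h1
  rwa [mul_one] at this

lemma Pa_stab (N : ℕ) {a b : ℕ} (ha : N + 1 ≤ a + 1) (hab : a ≤ b) :
    MOD (N + 1) (Pa b) (Pa a) := by
  refine prod_stab (N + 1) _ hab fun k hk => ?_
  show XX ^ (N + 1) ∣ (1 - XX ^ (k + 1) - 1)
  rw [show (1 : R) - XX ^ (k + 1) - 1 = -(XX ^ (k + 1)) by ring]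
  exact dvd_neg.mpr (pow_dvd_pow _ (by omega))

lemma Da_stab (N : ℕ) {a b : ℕ} (ha : N + 1 ≤ a + 1) (hab : a ≤ b) :
    MOD (N + 1) (Da b) (Da a) := by
  refine prod_stab (N + 1) _ hab fun k hk => ?_
  show XX ^ (N + 1) ∣ (1 + XX ^ (k + 1) - 1)
  rw [show (1 : R) + XX ^ (k + 1) - 1 = XX ^ (k + 1) by ring]
  exact pow_dvd_pow _ (by omega)

/-- the central congruence: the big binomial sum is ≡ C_N times the triangular sum -/
lemma central (N : ℕ) :
    MOD (N + 1)
      (∑ j ∈ Finset.range (2 * (2 * N + 4) + 1), gb (2 * (2 * N + 4)) j * XX ^ t2 (2 * N + 4) j)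
      (gb (2 * N + 2) (N + 1) * ∑ j ∈ Finset.range (2 * (2 * N + 4) + 1), XX ^ t2 (2 * N + 4) j) := by
  set m := 2 * N + 4 with hm
  rw [Finset.mul_sum]
  refine MOD.sum fun j hj => ?_
  have hj2m : j ≤ 2 * m := by
    have := Finset.mem_range.mp hj; omega
  rcases Nat.lt_or_ge (t2 m j) (N + 1) with ht | ht
  · -- central band : binomials agree
    have hband : N + 1 ≤ j ∧ j + N + 1 ≤ 2 * m := by
      rcases le_or_gt m j with h | h
      · have h1 : j - m ≤ tri (j - m) := le_tri _
        have h2 : t2 m j = tri (j - m) := by rw [t2, if_pos h]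
        omega
      · have h1 : m - j - 1 ≤ tri (m - j - 1) := le_tri _
        have h2 : t2 m j = tri (m - j - 1) := by rw [t2, if_neg (by omega)]
        omega
    exact (gb_stab N (2 * m) j hband.1 hband.2).mul (MOD.refl _ _)
  · -- outside : both sides ≡ 0
    have hz : MOD (N + 1) (XX ^ t2 m j) 0 := MOD.X_pow_zero (by omega)
    have h1 := (MOD.refl (N + 1) (gb (2 * m) j)).mul hz
    have h2 := (MOD.refl (N + 1) (gb (2 * N + 2) (N + 1))).mul hz
    rw [mul_zero] at h1 h2
    exact h1.trans h2.symm

end GaussAux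

/-- The formal power series (q^r;q^r)_∞ = ∏_{k≥1} (1 - q^{rk}) in ℤ[[q]]. -/
noncomputable def etaProd (r : ℕ) : PowerSeries ℤ :=
  PowerSeries.mk fun N =>
    PowerSeries.coeff N (∏ k ∈ Finset.range (N + 1), (1 - PowerSeries.X ^ (r * (k + 1))))

namespace GaussAux

lemma etaProd_mod (r N : ℕ) (hr : 1 ≤ r) :
    MOD (N + 1) (etaProd r) (∏ k ∈ Finset.range (N + 1), (1 - XX ^ (r * (k + 1)))) := by
  refine MOD.of_coeff fun j hj => ?_
  rw [etaProd, PowerSeries.coeff_mk]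
  have key : MOD (j + 1) (∏ k ∈ Finset.range (N + 1), (1 - XX ^ (r * (k + 1))))
      (∏ k ∈ Finset.range (j + 1), (1 - XX ^ (r * (k + 1)))) := by
    refine prod_stab (j + 1) _ (by omega) fun k hk => ?_
    show XX ^ (j + 1) ∣ (1 - XX ^ (r * (k + 1)) - 1)
    rw [show (1 : R) - XX ^ (r * (k + 1)) - 1 = -(XX ^ (r * (k + 1))) by ring]
    exact dvd_neg.mpr (pow_dvd_pow _ (by nlinarith))
  exact (key.coeff_eq (by omega)).symm

lemma etaProd_one_mod (N : ℕ) : MOD (N + 1) (etaProd 1) (Pa (N + 1)) := by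
  have h := etaProd_mod 1 N le_rfl
  have : (∏ k ∈ Finset.range (N + 1), (1 - XX ^ (1 * (k + 1)))) = Pa (N + 1) := by
    refine Finset.prod_congr rfl fun k _ => ?_
    rw [one_mul]
  rwa [this] at h

lemma etaProd_two_mod (N : ℕ) : MOD (N + 1) (etaProd 2) (P2 (N + 1)) := by
  exact etaProd_mod 2 N (by omega)

/-- main congruence: Sgen * Pa (N+1) ≡ P2 (N+1)^2 mod X^(N+1) -/
lemma main_cong (N : ℕ) :
    MOD (N + 1) (Pa (N + 1) * Sgen) (P2 (N + 1) * P2 (N + 1)) := by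
  set m := 2 * N + 4 with hm
  set C := gb (2 * N + 2) (N + 1) with hC
  -- step 1 : star identity with p = 2N+3
  have hstar := star (2 * N + 3)
  rw [show 2 * N + 3 + 1 = m by omega] at hstar
  -- step 2 : central congruence
  have hcen := central N
  rw [← hm, ← hC, hstar] at hcen
  -- hcen : MOD (N+1) (2 * Da (2N+3) * Da m) (C * ∑ X^t2)
  have ht2 := t2_sum m
  rw [ht2] at hcen
  -- C * (2 * Sfin m + X^tri m) ≡ 2 * (C * Sgen)
  have htri : MOD (N + 1) (XX ^ tri m) 0 := MOD.X_pow_zero (by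
    have := le_tri m; omega)
  have hS : MOD (N + 1) (Sfin m) Sgen := (Sgen_mod N m (by omega)).symm
  have step3 : MOD (N + 1) (C * (2 * Sfin m + XX ^ tri m)) (2 * (C * Sgen)) := by
    have h1 : MOD (N + 1) (2 * Sfin m + XX ^ tri m) (2 * Sgen + 0) :=
      ((MOD.refl (N + 1) 2).mul hS).add htri
    have h2 := (MOD.refl (N + 1) C).mul h1
    rw [add_zero] at h2
    refine h2.trans ?_
    rw [show C * (2 * Sgen) = 2 * (C * Sgen) by ring]
    exact MOD.refl _ _
  have step4 : MOD (N + 1) (2 * (C * Sgen)) (2 * (Da (2 * N + 3) * Da m)) := by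
    refine (step3.symm.trans hcen.symm).trans ?_
    rw [show (2 : R) * Da (2 * N + 3) * Da m = 2 * (Da (2 * N + 3) * Da m) by ring]
    exact MOD.refl _ _
  have step5 : MOD (N + 1) (C * Sgen) (Da (N + 1) * Da (N + 1)) := by
    refine (MOD.cancel_two step4).trans ?_
    exact (Da_stab N (by omega) (by omega)).mul (Da_stab N (by omega) (by omega))
  -- multiply by Pa (N+1) * Pa (N+1)
  have hprod : C * (Pa (N + 1) * Pa (N + 1)) = Pa (2 * N + 2) := by
    have := gb_mul_Pa (2 * N + 2) (N + 1) (by omega)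
    rwa [show 2 * N + 2 - (N + 1) = N + 1 by omega] at this
  have step6 : MOD (N + 1) (Pa (2 * N + 2) * Sgen) (P2 (N + 1) * P2 (N + 1)) := by
    have h1 := (MOD.refl (N + 1) (Pa (N + 1) * Pa (N + 1))).mul step5
    rw [show Pa (N + 1) * Pa (N + 1) * (C * Sgen) = C * (Pa (N + 1) * Pa (N + 1)) * Sgen by ring,
      hprod] at h1
    refine h1.trans ?_
    rw [show Pa (N + 1) * Pa (N + 1) * (Da (N + 1) * Da (N + 1)) =
      (Pa (N + 1) * Da (N + 1)) * (Pa (N + 1) * Da (N + 1)) by ring, ← P2_eq]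
    exact MOD.refl _ _
  refine MOD.trans ?_ step6
  exact (Pa_stab N (by omega) (by omega)).symm.mul (MOD.refl _ Sgen)

theorem key_identity : Sgen * etaProd 1 = etaProd 2 ^ 2 := by
  ext N
  have h1 : MOD (N + 1) (Sgen * etaProd 1) (Pa (N + 1) * Sgen) := by
    have := (MOD.refl (N + 1) Sgen).mul (etaProd_one_mod N)
    refine this.trans ?_
    rw [mul_comm]
    exact MOD.refl _ _
  have h2 : MOD (N + 1) (etaProd 2 ^ 2) (P2 (N + 1) * P2 (N + 1)) := by
    have := (etaProd_two_mod N).mul (etaProd_two_mod N)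
    rwa [← pow_two] at this
  exact ((h1.trans (main_cong N)).trans h2.symm).coeff_eq (by omega)

lemma etaProd_one_constantCoeff : PowerSeries.constantCoeff (etaProd 1) = 1 := by
  have : PowerSeries.constantCoeff (etaProd 1) = PowerSeries.coeff 0 (etaProd 1) := by
    rw [PowerSeries.coeff_zero_eq_constantCoeff]
  rw [this, etaProd, PowerSeries.coeff_mk]
  simp

end GaussAux

/-- Gauss's identity: ∑_{n≥0} q^{n(n+1)/2} = (q^2;q^2)_∞^2 / (q;q)_∞. -/
theorem gauss_identity :
    (PowerSeries.mk fun N : ℕ =>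
        ∑ n ∈ Finset.range (N + 1), if 2 * N = n * (n + 1) then (1 : ℤ) else 0) =
      etaProd 2 ^ 2 * PowerSeries.invOfUnit (etaProd 1) 1 := by
  have hkey := GaussAux.key_identity
  have hu : PowerSeries.constantCoeff (etaProd 1) = ((1 : ℤˣ) : ℤ) :=
    GaussAux.etaProd_one_constantCoeff
  have hinv := PowerSeries.mul_invOfUnit (etaProd 1) 1 hu
  calc (PowerSeries.mk fun N : ℕ =>
        ∑ n ∈ Finset.range (N + 1), if 2 * N = n * (n + 1) then (1 : ℤ) else 0)
      = GaussAux.Sgen * 1 := by rw [mul_one]; rfl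
    _ = GaussAux.Sgen * (etaProd 1 * PowerSeries.invOfUnit (etaProd 1) 1) := by rw [hinv]
    _ = (GaussAux.Sgen * etaProd 1) * PowerSeries.invOfUnit (etaProd 1) 1 := by ring
    _ = etaProd 2 ^ 2 * PowerSeries.invOfUnit (etaProd 1) 1 := by rw [hkey]
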